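/- arXiv:1401.0378 — 4 statements merged into one kernel-verified Lean document; each statement's English description precedes it below -/
import Mathlib

section
/- Let (g, [·,…,·]) be an n-ary Nambu-Lie superalgebra and ρ: g → g an even algebra endomorphism (ρ[x₁,…,xₙ] = [ρ(x₁),…,ρ(xₙ)]). Then g equipped with the twisted bracket [x₁,…,xₙ]_ρ := ρ([x₁,…,xₙ]) and the twisting map ρ is an n-ary multiplicative Hom-Nambu-Lie superalgebra. -/
open scoped BigOperators

universe u v w

variable (K : Type u) [Field K]

/-- The sign `(-1)^(a·b)` for `a b : ZMod 2`. -/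
def sgn (a b : ZMod 2) : K := if a = 1 ∧ b = 1 then -1 else 1

/-- Sum of the degrees with index strictly below `i`. -/
def psum {m : ℕ} (d : Fin m → ZMod 2) (i : Fin m) : ZMod 2 :=
  ∑ j ∈ Finset.univ.filter (fun j => j < i), d j

/-- Sum of the degrees with index strictly above `i`. -/
def ssum {m : ℕ} (d : Fin m → ZMod 2) (i : Fin m) : ZMod 2 :=
  ∑ j ∈ Finset.univ.filter (fun j => i < j), d j

/-- Raw data of an `(n+2)`-ary algebra with a `ZMod 2`-grading and a twisting map:
a grading by submodules forming an internal direct sum, an `(n+2)`-linear bracket and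
a linear map `α`. -/
structure NData (n : ℕ) (g : Type v) [AddCommGroup g] [Module K g] where
  G : ZMod 2 → Submodule K g
  internal : DirectSum.IsInternal G
  br : MultilinearMap K (fun _ : Fin (n + 2) => g) g
  α : g →ₗ[K] g

namespace NData

variable {K} {n : ℕ} {g : Type v} [AddCommGroup g] [Module K g] (A : NData K n g)

/-- A tuple is homogeneous with (componentwise) degrees `d`. -/
def Homog {m : ℕ} (x : Fin m → g) (d : Fin m → ZMod 2) : Prop := ∀ i, x i ∈ A.G (d i)

/-- Action of a fundamental object (an `(n+1)`-tuple) on an element. -/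
def act (x : Fin (n + 1) → g) (z : g) : g := A.br (Fin.snoc x z)

/-- The `i`-th component tuple of the bracket `[x,y]_α` of fundamental objects:
`α y₁ ∧ ⋯ ∧ (x · yᵢ) ∧ ⋯ ∧ α y_{n+1}`. -/
def comp (x y : Fin (n + 1) → g) (i : Fin (n + 1)) : Fin (n + 1) → g :=
  Function.update (fun k => A.α (y k)) i (A.act x (y i))

/-- The bracket is even. -/
def BrEven : Prop := ∀ (d : Fin (n + 2) → ZMod 2) (x : Fin (n + 2) → g),
  A.Homog x d → A.br x ∈ A.G (∑ i, d i)

/-- The bracket is super-skew-symmetric in adjacent arguments. -/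
def BrSkew : Prop := ∀ (d : Fin (n + 2) → ZMod 2) (x : Fin (n + 2) → g), A.Homog x d →
  ∀ i j : Fin (n + 2), (i : ℕ) + 1 = (j : ℕ) →
    A.br (x ∘ Equiv.swap i j) = -(sgn K (d i) (d j) • A.br x)

/-- `α` is even. -/
def AlphaEven : Prop := ∀ (d : ZMod 2) (x : g), x ∈ A.G d → A.α x ∈ A.G d

/-- `α` is multiplicative with respect to the bracket. -/
def Mult : Prop := ∀ x : Fin (n + 2) → g, A.α (A.br x) = A.br fun i => A.α (x i)

/-- The graded Filippov (fundamental) identity. -/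
def Filippov : Prop := ∀ (dx : Fin (n + 1) → ZMod 2) (dy : Fin (n + 2) → ZMod 2)
    (x : Fin (n + 1) → g) (y : Fin (n + 2) → g), A.Homog x dx → A.Homog y dy →
  A.act x (A.br y) = ∑ i, sgn K (∑ k, dx k) (psum dy i) •
    A.br (Function.update y i (A.act x (y i)))

/-- The `α`-twisted graded Filippov identity. -/
def HomFilippov : Prop := ∀ (dx : Fin (n + 1) → ZMod 2) (dy : Fin (n + 2) → ZMod 2)
    (x : Fin (n + 1) → g) (y : Fin (n + 2) → g), A.Homog x dx → A.Homog y dy →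
  A.act (fun k => A.α (x k)) (A.br y) = ∑ i, sgn K (∑ k, dx k) (psum dy i) •
    A.br (Function.update (fun k => A.α (y k)) i (A.act x (y i)))

/-- `(g,[·,…,·])` is an `(n+2)`-ary Nambu-Lie superalgebra (the map `α` is irrelevant). -/
def IsNambuLieSuper : Prop := A.BrEven ∧ A.BrSkew ∧ A.Filippov

/-- `(g,[·,…,·],α)` is an `(n+2)`-ary multiplicative Hom-Nambu-Lie superalgebra. -/
def IsHomNambuLieSuper : Prop :=
  A.BrEven ∧ A.BrSkew ∧ A.AlphaEven ∧ A.Mult ∧ A.HomFilippov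

/-- The action of the bracket `[x,y]_α` of two fundamental objects on an element `z`,
where `dx` is the total degree of `x` and `dy` the componentwise degrees of `y`. -/
def wbrAct (dx : ZMod 2) (dy : Fin (n + 1) → ZMod 2) (x y : Fin (n + 1) → g) (z : g) : g :=
  ∑ i, sgn K dx (psum dy i) • A.act (A.comp x y i) z

/-- `(ρ, ν, GV)` is a graded representation of `A` on `V`. -/
def IsRep {V : Type w} [AddCommGroup V] [Module K V]
    (ρ : MultilinearMap K (fun _ : Fin (n + 1) => g) (Module.End K V))
    (ν : Module.End K V) (GV : ZMod 2 → Submodule K V) : Prop :=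
  (∀ (d : Fin (n + 1) → ZMod 2) (x : Fin (n + 1) → g), A.Homog x d →
    ∀ (β : ZMod 2) (v : V), v ∈ GV β → ρ x v ∈ GV (β + ∑ i, d i)) ∧
  (∀ (dx dy : Fin (n + 1) → ZMod 2) (x y : Fin (n + 1) → g), A.Homog x dx → A.Homog y dy →
    ρ (fun k => A.α (x k)) * ρ y
      = sgn K (∑ i, dx i) (∑ i, dy i) • (ρ (fun k => A.α (y k)) * ρ x)
        + (∑ i, sgn K (∑ k, dx k) (psum dy i) • ρ (A.comp x y i)) * ν) ∧
  (∀ (dx : Fin n → ZMod 2) (dy : Fin (n + 2) → ZMod 2) (x : Fin n → g) (y : Fin (n + 2) → g),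
    A.Homog x dx → A.Homog y dy →
    ρ (Fin.snoc (fun k => A.α (x k)) (A.br y)) * ν
      = ∑ i : Fin (n + 2), ((-1 : K) ^ (n + 1 - (i : ℕ))
          * sgn K (∑ k, dx k) ((∑ k, dy k) + dy i)
          * sgn K (dy i) (ssum dy i)) •
        (ρ (fun k => A.α (y (i.succAbove k))) * ρ (Fin.snoc x (y i))))

/-- The adjoint action of a fundamental object, as an endomorphism of `g`. -/
def adE : MultilinearMap K (fun _ : Fin (n + 1) => g) (Module.End K g) :=
  A.br.curryRight

/-- The degree-`d` part of the graded dual space: functionals vanishing on the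
component of the other degree. -/
def dualG (d : ZMod 2) : Submodule K (Module.Dual K g) where
  carrier := {f | ∀ x ∈ A.G (d + 1), f x = 0}
  add_mem' := by
    intro a b ha hb x hx
    simp [ha x hx, hb x hx]
  zero_mem' := by intro x _; simp
  smul_mem' := by
    intro c f hf x hx
    simp [hf x hx]

/-- The coadjoint action `ad*(x)(φ) = -(-1)^{|x||φ|} φ ∘ ad(x)`, with the degrees
`dx` of `x` and `df` of `φ` given explicitly. -/
def coad (dx df : ZMod 2) (x : Fin (n + 1) → g) (φ : Module.Dual K g) : Module.Dual K g :=
  -(sgn K dx df) • (φ ∘ₗ (A.adE x : g →ₗ[K] g))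

/-- The grading of `g ⊕ g*`. -/
def tG (d : ZMod 2) : Submodule K (g × Module.Dual K g) := (A.G d).prod (A.dualG d)

/-- The twist map `α'(x+f) = α(x) + f ∘ α` of the `T*`-extension. -/
def tα : (g × Module.Dual K g) →ₗ[K] g × Module.Dual K g :=
  LinearMap.prodMap A.α A.α.dualMap

/-- The bracket of the `T*`-extension by `θ`, on tuples with degree annotations `d`. -/
def tbr (θ : (Fin (n + 2) → g) → Module.Dual K g) (d : Fin (n + 2) → ZMod 2)
    (p : Fin (n + 2) → g × Module.Dual K g) : g × Module.Dual K g :=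
  (A.br (fun i => (p i).1),
   θ (fun i => (p i).1)
     + ∑ i : Fin (n + 2), ((-1 : K) ^ (n + 1 - (i : ℕ)) * sgn K (d i) (ssum d i)) •
         A.coad ((∑ k, d k) + d i) (d i) (fun k => (p (i.succAbove k)).1) ((p i).2))

/-- The canonical pairing `⟨x+f, y+h⟩ = f(y) + (-1)^{|x+f||y+h|} h(x)` on `g ⊕ g*`,
with the degrees given explicitly. -/
def tpair (_A : NData K n g) (d₁ d₂ : ZMod 2) (u v : g × Module.Dual K g) : K :=
  u.2 v.1 + sgn K d₁ d₂ * v.2 u.1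

/-- The coboundary of a `1`-cochain with values in the dual module (with the coadjoint
action), on homogeneous arguments with the indicated degrees. -/
def tdelta (θ : (Fin (n + 2) → g) → Module.Dual K g)
    (dx : Fin (n + 1) → ZMod 2) (dY : Fin (n + 2) → ZMod 2)
    (x : Fin (n + 1) → g) (Y : Fin (n + 2) → g) : Module.Dual K g :=
  θ (Fin.snoc (fun k => A.α (x k)) (A.br Y))
    + A.coad (∑ k, dx k) (∑ k, dY k) (fun k => A.α (x k)) (θ Y)
    - ∑ i, sgn K (∑ k, dx k) (psum dY i) •
        θ (Function.update (fun k => A.α (Y k)) i (A.act x (Y i)))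
    - ∑ i : Fin (n + 2), (sgn K (∑ k, dx k) (psum dY i) * (-1 : K) ^ (n + 1 - (i : ℕ))
          * sgn K ((∑ k, dx k) + dY i) (ssum dY i)) •
        A.coad ((∑ k, dY k) + dY i) ((∑ k, dx k) + dY i)
          (fun k => A.α (Y (i.succAbove k))) (θ (Fin.snoc x (Y i)))

/-- `θ` is an even `1`-supercocycle with values in `g*`:
it is even, equivariant, super-skew-symmetric and `δθ = 0`. -/
def TZ1 (θ : (Fin (n + 2) → g) → Module.Dual K g) : Prop :=
  (∀ (d : Fin (n + 2) → ZMod 2) (p : Fin (n + 2) → g), A.Homog p d →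
      θ p ∈ A.dualG (∑ i, d i)) ∧
  (∀ p : Fin (n + 2) → g, θ (fun i => A.α (p i)) = (θ p).comp A.α) ∧
  (∀ (d : Fin (n + 2) → ZMod 2) (p : Fin (n + 2) → g), A.Homog p d →
      ∀ i j : Fin (n + 2), (i : ℕ) + 1 = (j : ℕ) →
        θ (p ∘ Equiv.swap i j) = -(sgn K (d i) (d j) • θ p)) ∧
  (∀ (dx : Fin (n + 1) → ZMod 2) (dY : Fin (n + 2) → ZMod 2)
      (x : Fin (n + 1) → g) (Y : Fin (n + 2) → g), A.Homog x dx → A.Homog Y dY →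
        A.tdelta θ dx dY x Y = 0)

/-- The cyclicity condition `θ(x,y)(z) + (-1)^{|y||z|} θ(x,z)(y) = 0`. -/
def TCyclic (θ : (Fin (n + 2) → g) → Module.Dual K g) : Prop :=
  ∀ (dx : Fin (n + 1) → ZMod 2) (dy dz : ZMod 2) (x : Fin (n + 1) → g) (y z : g),
    A.Homog x dx → y ∈ A.G dy → z ∈ A.G dz →
      θ (Fin.snoc x y) z + sgn K dy dz * θ (Fin.snoc x z) y = 0

/-- `I` is a Hom-ideal: stable under `α` and absorbing in the first slot. -/
def IsHomIdeal (I : Submodule K g) : Prop :=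
  (∀ x ∈ I, A.α x ∈ I) ∧ ∀ p : Fin (n + 2) → g, p 0 ∈ I → A.br p ∈ I

/-- `I` is a graded subspace: it is spanned by its homogeneous elements. -/
def IsGradedSub (I : Submodule K g) : Prop :=
  I ≤ Submodule.span K ((I : Set g) ∩ ((A.G 0 : Set g) ∪ (A.G 1 : Set g)))

/-- The orthogonal space of `S` with respect to a bilinear form `B`. -/
def perpB (_A : NData K n g) (B : g →ₗ[K] g →ₗ[K] K) (S : Submodule K g) : Submodule K g where
  carrier := {x | ∀ y ∈ S, B x y = 0}
  add_mem' := by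
    intro a b ha hb y hy
    simp [ha y hy, hb y hy]
  zero_mem' := by intro y _; simp
  smul_mem' := by
    intro c x hx y hy
    simp [hx y hy]

/-- `B` is a metric on `A`: nondegenerate, supersymmetric, consistent, invariant, and
`α` is `B`-symmetric. -/
def IsMetric (B : g →ₗ[K] g →ₗ[K] K) : Prop :=
  (∀ x : g, (∀ y : g, B x y = 0) → x = 0) ∧
  (∀ (dx dy : ZMod 2) (x y : g), x ∈ A.G dx → y ∈ A.G dy →
      B x y = sgn K dx dy * B y x) ∧
  (∀ (dx dy : ZMod 2) (x y : g), x ∈ A.G dx → y ∈ A.G dy → dx ≠ dy → B x y = 0) ∧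
  (∀ (dx : Fin (n + 1) → ZMod 2) (dy : ZMod 2) (x : Fin (n + 1) → g) (y z : g),
      A.Homog x dx → y ∈ A.G dy →
        B (A.act x y) z = -(sgn K (∑ i, dx i) dy * B y (A.act x z))) ∧
  (∀ x y : g, B (A.α x) y = B (A.α y) x)

/-- `[S, g, …, g]` (ideal-type product, `S` in the first slot). -/
def brFirst (S : Submodule K g) : Submodule K g :=
  Submodule.span K {y | ∃ p : Fin (n + 2) → g, p 0 ∈ S ∧ y = A.br p}

/-- `[g, …, g, S]` (`S` in the last slot). -/
def brLast (S : Submodule K g) : Submodule K g :=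
  Submodule.span K {y | ∃ p : Fin (n + 2) → g, p (Fin.last (n + 1)) ∈ S ∧ y = A.br p}

/-- `[S, …, S]` (all slots in `S`). -/
def brAll (S : Submodule K g) : Submodule K g :=
  Submodule.span K {y | ∃ p : Fin (n + 2) → g, (∀ i, p i ∈ S) ∧ y = A.br p}

/-- The lower central series: `lcs 0 = g = g¹`, `lcs m = g^{m+1}`. -/
def lcs (m : ℕ) : Submodule K g := Nat.rec ⊤ (fun _ ih => A.brFirst ih) m

/-- The derived series: `ds 0 = g = g^{(0)}`, `ds m = g^{(m)}`. -/
def ds (m : ℕ) : Submodule K g := Nat.rec ⊤ (fun _ ih => A.brAll ih) m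

/-- `C(V) = {x | [x,g,…,g] ⊆ V}`. -/
def cv (S : Submodule K g) : Submodule K g where
  carrier := {x | ∀ p : Fin (n + 2) → g, A.br (Function.update p 0 x) ∈ S}
  add_mem' := by
    intro a b ha hb p
    rw [A.br.map_update_add]
    exact S.add_mem (ha p) (hb p)
  zero_mem' := by
    intro p
    rw [A.br.map_update_zero]
    exact S.zero_mem
  smul_mem' := by
    intro c x hx p
    rw [A.br.map_update_smul]
    exact S.smul_mem c (hx p)

/-- The ascending series `C₀(g) = 0`, `C_{i+1}(g) = C(Cᵢ(g))`. -/
def cs (m : ℕ) : Submodule K g := Nat.rec ⊥ (fun _ ih => A.cv ih) m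

/-- `g` is nilpotent of length exactly `k` (with the convention `g¹ = g = lcs 0`). -/
def NilpLength (k : ℕ) : Prop :=
  1 ≤ k ∧ A.lcs (k - 1) = ⊥ ∧ ∀ j, 1 ≤ j → j < k → A.lcs (j - 1) ≠ ⊥

/-- `g` is solvable of length exactly `k`. -/
def SolvLength (k : ℕ) : Prop :=
  A.ds k = ⊥ ∧ ∀ j < k, A.ds j ≠ ⊥

/-- `[S, T*g, …, T*g]_θ`-type span for the `T*`-extension, `S` in the first slot,
over homogeneous annotated tuples. -/
def tbrFirst (θ : (Fin (n + 2) → g) → Module.Dual K g)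
    (S : Submodule K (g × Module.Dual K g)) : Submodule K (g × Module.Dual K g) :=
  Submodule.span K {u | ∃ (d : Fin (n + 2) → ZMod 2) (p : Fin (n + 2) → g × Module.Dual K g),
    (∀ i, p i ∈ A.tG (d i)) ∧ p 0 ∈ S ∧ u = A.tbr θ d p}

/-- All-slots bracket span for the `T*`-extension, over homogeneous annotated tuples. -/
def tbrAll (θ : (Fin (n + 2) → g) → Module.Dual K g)
    (S : Submodule K (g × Module.Dual K g)) : Submodule K (g × Module.Dual K g) :=
  Submodule.span K {u | ∃ (d : Fin (n + 2) → ZMod 2) (p : Fin (n + 2) → g × Module.Dual K g),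
    (∀ i, p i ∈ A.tG (d i)) ∧ (∀ i, p i ∈ S) ∧ u = A.tbr θ d p}

/-- Lower central series of the `T*`-extension. -/
def tlcs (θ : (Fin (n + 2) → g) → Module.Dual K g) (m : ℕ) :
    Submodule K (g × Module.Dual K g) := Nat.rec ⊤ (fun _ ih => A.tbrFirst θ ih) m

/-- Derived series of the `T*`-extension. -/
def tds (θ : (Fin (n + 2) → g) → Module.Dual K g) (m : ℕ) :
    Submodule K (g × Module.Dual K g) := Nat.rec ⊤ (fun _ ih => A.tbrAll θ ih) m

/-- Nilpotency length of the `T*`-extension. -/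
def TNilpLength (θ : (Fin (n + 2) → g) → Module.Dual K g) (k : ℕ) : Prop :=
  1 ≤ k ∧ A.tlcs θ (k - 1) = ⊥ ∧ ∀ j, 1 ≤ j → j < k → A.tlcs θ (j - 1) ≠ ⊥

/-- Solvability length of the `T*`-extension. -/
def TSolvLength (θ : (Fin (n + 2) → g) → Module.Dual K g) (k : ℕ) : Prop :=
  A.tds θ k = ⊥ ∧ ∀ j < k, A.tds θ j ≠ ⊥

end NData

/-! Post-composing with the even linear map `ρ` preserves evenness and super-skew-symmetry of
the bracket. Multiplicativity lets every `ρ` inside a twisted bracket be pulled out, so each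
side of the `ρ`-twisted Filippov identity for `ρ ∘ [·,…,·]` is `ρ²` applied to the
corresponding side of the ordinary Filippov identity. -/

namespace NData

variable {K} {n : ℕ} {g : Type v} [AddCommGroup g] [Module K g] (A : NData K n g)

def twist : NData K n g := { A with br := A.α.compMultilinearMap A.br }

@[simp]
theorem twist_br (x : Fin (n + 2) → g) : A.twist.br x = A.α (A.br x) := rfl

@[simp]
theorem twist_α : A.twist.α = A.α := rfl

theorem twist_act (x : Fin (n + 1) → g) (z : g) : A.twist.act x z = A.α (A.act x z) := rfl

variable {A}

theorem Mult.map_act (hmult : A.Mult) (x : Fin (n + 1) → g) (z : g) :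
    A.α (A.act x z) = A.act (fun k => A.α (x k)) (A.α z) := by
  rw [act, act, hmult]
  exact congrArg A.br (Fin.comp_snoc A.α x z)

theorem BrEven.twist (heven : A.BrEven) (hα : A.AlphaEven) : A.twist.BrEven :=
  fun d x hx => hα _ _ (heven d x hx)

theorem BrSkew.twist (hskew : A.BrSkew) : A.twist.BrSkew := by
  intro d x hx i j hij
  simp only [twist_br, hskew d x hx i j hij, map_neg, map_smul]

theorem Mult.twist (hmult : A.Mult) : A.twist.Mult :=
  fun x => congrArg A.α (hmult x)

theorem Filippov.homFilippov_twist (hfil : A.Filippov) (hmult : A.Mult) :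
    A.twist.HomFilippov := by
  intro dx dy x y hx hy
  have hterm : ∀ i, A.twist.br (Function.update (fun k => A.α (y k)) i (A.twist.act x (y i)))
      = A.α (A.α (A.br (Function.update y i (A.act x (y i))))) := by
    intro i
    rw [twist_br, twist_act, ← Function.comp_def A.α y, ← Function.comp_update,
      hmult (Function.update y i _)]
    rfl
  calc A.twist.act (fun k => A.α (x k)) (A.twist.br y)
      = A.α (A.α (A.act x (A.br y))) := by rw [twist_act, twist_br, hmult.map_act x (A.br y)]
    _ = _ := by simp only [hfil dx dy x y hx hy, map_sum, map_smul, twist_α, hterm]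

end NData

/-- If `(g,[·,…,·])` is an `n`-ary Nambu-Lie superalgebra and `ρ = A.α`
is an even endomorphism of it, then `g` with the twisted bracket `ρ ∘ [·,…,·]` and
twisting map `ρ` is an `n`-ary multiplicative Hom-Nambu-Lie superalgebra. -/
theorem twist_of_endomorphism {K : Type u} [Field K] {n : ℕ} {g : Type v}
    [AddCommGroup g] [Module K g] (A : NData K n g)
    (hNLS : A.IsNambuLieSuper) (hρeven : A.AlphaEven)
    (hρmult : ∀ x : Fin (n + 2) → g, A.α (A.br x) = A.br fun i => A.α (x i)) :
    NData.IsHomNambuLieSuper { A with br := A.α.compMultilinearMap A.br } := by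
  obtain ⟨hEven, hSkew, hFil⟩ := hNLS
  exact ⟨hEven.twist hρeven, hSkew.twist, hρeven, NData.Mult.twist hρmult,
    hFil.homFilippov_twist hρmult⟩
end

section
/- Let (g,[·,…,·],α) be an n-ary multiplicative Hom-Nambu-Lie superalgebra. Then the bracket [·,·]_α on fundamental objects satisfies the Hom-super-Jacobi identity: [α(𝔵),[𝔶,𝔷]_α]_α = (-1)^{|𝔵||𝔶|}[α(𝔶),[𝔵,𝔷]_α]_α + [[𝔵,𝔶]_α, α(𝔷)]_α for all fundamental objects 𝔵,𝔶,𝔷. -/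
open scoped BigOperators

universe u v w

variable (K : Type u) [Field K]

/-- Degrees of the components of `comp x y i`, given the total degree `dx` of `x` and
the componentwise degrees `dy` of `y`. -/
def compDeg {n : ℕ} (dx : ZMod 2) (dy : Fin (n + 1) → ZMod 2) (i : Fin (n + 1)) :
    Fin (n + 1) → ZMod 2 := Function.update dy i (dx + dy i)

/-!
Expanding both inner brackets, `[α 𝔵, [𝔶, 𝔷]_α]_α` is a double sum over the slot `j` of `𝔷`
acted on by `𝔶` and the slot `i` then acted on by `α 𝔵`. For `i ≠ j` the two actions hit
different slots, so by multiplicativity of `α` the summand equals `(-1)^{|𝔵||𝔶|}` times the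
`(i, j)` summand of `[α 𝔶, [𝔵, 𝔷]_α]_α`. For `i = j` the slot holds `α 𝔵 · (𝔶 · z_j)`, which the
Hom-Filippov identity splits into the slot-`j` part of `[[𝔵, 𝔶]_α, α 𝔷]_α` plus
`(-1)^{|𝔵||𝔶|}` times the diagonal summand of `[α 𝔶, [𝔵, 𝔷]_α]_α`.
-/

section Signs

variable {K : Type u} [Field K]

lemma sgn_comm (a b : ZMod 2) : sgn K a b = sgn K b a := by
  simp only [sgn, and_comm]

lemma sgn_mul_self (a b : ZMod 2) : sgn K a b * sgn K a b = 1 := by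
  unfold sgn; split_ifs <;> norm_num

lemma sgn_add_left (a b c : ZMod 2) : sgn K (a + b) c = sgn K a c * sgn K b c := by
  have h2 : ∀ x : ZMod 2, x = 0 ∨ x = 1 := by decide
  rcases h2 a with rfl | rfl <;> rcases h2 b with rfl | rfl <;> rcases h2 c with rfl | rfl <;>
    simp [sgn, show (1 : ZMod 2) + 1 = 0 from rfl]

lemma sgn_add_right (a b c : ZMod 2) : sgn K a (b + c) = sgn K a b * sgn K a c := by
  rw [sgn_comm, sgn_add_left, sgn_comm b, sgn_comm c]

end Signs

lemma psum_snoc_castSucc {m : ℕ} (d : Fin (m + 1) → ZMod 2) (c : ZMod 2) (i : Fin (m + 1)) :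
    psum (Fin.snoc d c) i.castSucc = psum d i := by
  have h : ¬ Fin.last (m + 1) < i.castSucc := (Fin.castSucc_lt_last i).asymm
  simp [psum, Finset.sum_filter, Fin.sum_univ_castSucc, h]

lemma psum_snoc_last {m : ℕ} (d : Fin (m + 1) → ZMod 2) (c : ZMod 2) :
    psum (Fin.snoc d c) (Fin.last (m + 1)) = ∑ k, d k := by
  simp [psum, Finset.sum_filter, Fin.sum_univ_castSucc, Fin.castSucc_lt_last]

lemma psum_compDeg_of_le {n : ℕ} (a : ZMod 2) (d : Fin (n + 1) → ZMod 2) {i j : Fin (n + 1)}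
    (h : i ≤ j) : psum (compDeg a d j) i = psum d i :=
  Finset.sum_congr rfl fun _ hk =>
    Function.update_of_ne ((Finset.mem_filter.1 hk).2.trans_le h).ne _ _

lemma psum_compDeg_of_lt {n : ℕ} (a : ZMod 2) (d : Fin (n + 1) → ZMod 2) {i j : Fin (n + 1)}
    (h : j < i) : psum (compDeg a d j) i = psum d i + a := by
  have hj : j ∈ Finset.univ.filter (· < i) := by simp [h]
  unfold psum compDeg
  rw [Finset.sum_update_of_mem hj, ← Finset.add_sum_erase _ d hj,
    Finset.sdiff_singleton_eq_erase]
  ring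

lemma sum_sum_eq_smul_sum_sum_add_of_offDiag {ι R M : Type*} [Fintype ι] [Semiring R]
    [AddCommMonoid M] [Module R M] {F G : ι → ι → M} {H : ι → M} (s : R)
    (hdiag : ∀ j, F j j = s • G j j + H j) (hoff : ∀ i j, i ≠ j → F j i = s • G i j) :
    ∑ j, ∑ i, F j i = s • ∑ j, ∑ i, G j i + ∑ j, H j := by
  classical
  have hF : ∀ j i, F j i = s • G i j + if i = j then H j else 0 := by
    intro j i
    split_ifs with h
    · subst h; exact hdiag i
    · rw [add_zero, hoff i j h]
  simp only [hF, Finset.sum_add_distrib, Finset.sum_ite_eq', Finset.mem_univ, if_true,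
    ← Finset.smul_sum]
  rw [Finset.sum_comm]

namespace NData

variable {K : Type u} [Field K] {n : ℕ} {g : Type v} [AddCommGroup g] [Module K g]
  (A : NData K n g)

lemma Homog.snoc {A : NData K n g} {m : ℕ} {y : Fin (m + 1) → g} {d : Fin (m + 1) → ZMod 2}
    {w : g} {c : ZMod 2} (hy : A.Homog y d) (hw : w ∈ A.G c) :
    A.Homog (Fin.snoc y w) (Fin.snoc d c) := by
  intro k
  induction k using Fin.lastCases with
  | last => simpa using hw
  | cast k => simpa using hy k

lemma Mult.act_alpha {A : NData K n g} (hm : A.Mult) (x : Fin (n + 1) → g) (w : g) :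
    A.act (fun k => A.α (x k)) (A.α w) = A.α (A.act x w) := by
  rw [act, act, hm]
  exact congrArg A.br (Fin.comp_snoc A.α x w).symm

lemma HomFilippov.act_act {A : NData K n g} (hf : A.HomFilippov)
    {dx dy : Fin (n + 1) → ZMod 2} {c : ZMod 2} {x y : Fin (n + 1) → g} {w : g}
    (hx : A.Homog x dx) (hy : A.Homog y dy) (hw : w ∈ A.G c) :
    A.act (fun k => A.α (x k)) (A.act y w)
      = ∑ k, sgn K (∑ m, dx m) (psum dy k) • A.act (A.comp x y k) (A.α w)
        + sgn K (∑ m, dx m) (∑ m, dy m) • A.act (fun k => A.α (y k)) (A.act x w) := by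
  have h := hf dx (Fin.snoc dy c) x (Fin.snoc y w) hx (hy.snoc hw)
  rw [Fin.sum_univ_castSucc] at h
  simp only [← Function.comp_def A.α, Fin.comp_snoc, psum_snoc_castSucc, psum_snoc_last,
    Fin.snoc_castSucc, Fin.snoc_last, ← Fin.snoc_update, Fin.update_snoc_last] at h
  exact h

lemma alpha_comp (x y : Fin (n + 1) → g) (j : Fin (n + 1)) :
    (fun k => A.α (A.comp x y j k))
      = Function.update (fun k => A.α (A.α (y k))) j (A.α (A.act x (y j))) :=
  Function.comp_update A.α _ j _

lemma comp_alpha_comp_self (x y z : Fin (n + 1) → g) (j : Fin (n + 1)) :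
    A.comp (fun k => A.α (x k)) (A.comp y z j) j
      = Function.update (fun k => A.α (A.α (z k))) j
          (A.act (fun k => A.α (x k)) (A.act y (z j))) := by
  rw [comp, alpha_comp, Function.update_idem, comp, Function.update_self]

lemma comp_alpha_comp_of_ne {A : NData K n g} (hm : A.Mult) (x y z : Fin (n + 1) → g)
    {i j : Fin (n + 1)} (h : i ≠ j) :
    A.comp (fun k => A.α (x k)) (A.comp y z j) i
      = Function.update (Function.update (fun k => A.α (A.α (z k))) j
          (A.α (A.act y (z j)))) i (A.α (A.act x (z i))) := by
  rw [comp, alpha_comp, comp, Function.update_of_ne h, hm.act_alpha]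

variable {W : Type w} [AddCommGroup W] [Module K W]
  (φ : MultilinearMap K (fun _ : Fin (n + 1) => g) W)

/-- The `(j, i)` summand of `φ [α 𝔵, [𝔶, 𝔷]_α]_α`, for `𝔵`, `𝔶` of total degrees `a`, `b`. -/
def nestedTerm (a b : ZMod 2) (dz : Fin (n + 1) → ZMod 2) (x y z : Fin (n + 1) → g)
    (j i : Fin (n + 1)) : W :=
  (sgn K b (psum dz j) * sgn K a (psum (compDeg b dz j) i)) •
    φ (A.comp (fun k => A.α (x k)) (A.comp y z j) i)

lemma nestedTerm_of_ne {A : NData K n g} (hm : A.Mult) (a b : ZMod 2)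
    (dz : Fin (n + 1) → ZMod 2) (x y z : Fin (n + 1) → g) {i j : Fin (n + 1)} (h : i ≠ j) :
    A.nestedTerm φ a b dz x y z j i = sgn K a b • A.nestedTerm φ b a dz y x z i j := by
  rw [nestedTerm, nestedTerm, comp_alpha_comp_of_ne hm x y z h,
    comp_alpha_comp_of_ne hm y x z h.symm, Function.update_comm h, smul_smul]
  congr 1
  rcases h.lt_or_gt with hlt | hgt
  · rw [psum_compDeg_of_le _ _ hlt.le, psum_compDeg_of_lt _ _ hlt, sgn_add_right, sgn_comm b a]
    linear_combination -(sgn K b (psum dz j) * sgn K a (psum dz i)) * sgn_mul_self (K := K) a b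
  · rw [psum_compDeg_of_lt _ _ hgt, psum_compDeg_of_le _ _ hgt.le, sgn_add_right]
    ring

lemma nestedTerm_self {A : NData K n g} (hf : A.HomFilippov) {dx dy dz : Fin (n + 1) → ZMod 2}
    {x y z : Fin (n + 1) → g} (hx : A.Homog x dx) (hy : A.Homog y dy) (hz : A.Homog z dz)
    (j : Fin (n + 1)) :
    A.nestedTerm φ (∑ k, dx k) (∑ k, dy k) dz x y z j j
      = sgn K (∑ k, dx k) (∑ k, dy k) • A.nestedTerm φ (∑ k, dy k) (∑ k, dx k) dz y x z j j
        + ∑ k, (sgn K ((∑ k, dx k) + ∑ k, dy k) (psum dz j) * sgn K (∑ k, dx k) (psum dy k)) •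
            φ (A.comp (A.comp x y k) (fun m => A.α (z m)) j) := by
  have key := congrArg (φ.toLinearMap (fun k => A.α (A.α (z k))) j) (hf.act_act hx hy (hz j))
  simp only [map_add, map_sum, map_smul, MultilinearMap.toLinearMap_apply] at key
  rw [nestedTerm, nestedTerm, comp_alpha_comp_self, comp_alpha_comp_self,
    psum_compDeg_of_le _ _ le_rfl, psum_compDeg_of_le _ _ le_rfl, key, smul_add, Finset.smul_sum,
    smul_smul, smul_smul, add_comm]
  congr 1
  · congr 1
    ring
  · refine Finset.sum_congr rfl fun k _ => ?_
    rw [smul_smul, sgn_add_left]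
    congr 1
    ring

end NData

theorem hom_super_jacobi_general {K : Type u} [Field K] {n : ℕ} {g : Type v}
    [AddCommGroup g] [Module K g] (A : NData K n g) (hA : A.IsHomNambuLieSuper)
    {W : Type w} [AddCommGroup W] [Module K W]
    (φ : MultilinearMap K (fun _ : Fin (n + 1) => g) W)
    (dx dy dz : Fin (n + 1) → ZMod 2) (x y z : Fin (n + 1) → g)
    (hx : A.Homog x dx) (hy : A.Homog y dy) (hz : A.Homog z dz) :
    ∑ j : Fin (n + 1), ∑ i : Fin (n + 1),
        (sgn K (∑ k, dy k) (psum dz j)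
          * sgn K (∑ k, dx k) (psum (compDeg (∑ k, dy k) dz j) i)) •
        φ (A.comp (fun k => A.α (x k)) (A.comp y z j) i)
      = sgn K (∑ k, dx k) (∑ k, dy k) •
          ∑ j : Fin (n + 1), ∑ i : Fin (n + 1),
            (sgn K (∑ k, dx k) (psum dz j)
              * sgn K (∑ k, dy k) (psum (compDeg (∑ k, dx k) dz j) i)) •
            φ (A.comp (fun k => A.α (y k)) (A.comp x z j) i)
        + ∑ i : Fin (n + 1), ∑ j : Fin (n + 1),
            (sgn K ((∑ k, dx k) + ∑ k, dy k) (psum dz i)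
              * sgn K (∑ k, dx k) (psum dy j)) •
            φ (A.comp (A.comp x y j) (fun k => A.α (z k)) i) := by
  obtain ⟨-, -, -, hm, hf⟩ := hA
  exact sum_sum_eq_smul_sum_sum_add_of_offDiag (F := A.nestedTerm φ _ _ dz x y z)
    (G := A.nestedTerm φ _ _ dz y x z) _ (A.nestedTerm_self φ hf hx hy hz)
    fun _ _ h => A.nestedTerm_of_ne φ hm _ _ dz x y z h

/-- The Hom-super-Jacobi identity
`[α(𝔵),[𝔶,𝔷]_α]_α = (-1)^{|𝔵||𝔶|}[α(𝔶),[𝔵,𝔷]_α]_α + [[𝔵,𝔶]_α, α(𝔷)]_α`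
in the `(n+1)`-st super wedge power of `g`, expressed via the universal property:
both sides agree after applying any multilinear map `φ` that is super-skew-symmetric
in adjacent homogeneous arguments, expanding all wedge brackets into their
decomposable components. -/
theorem hom_super_jacobi {K : Type u} [Field K] {n : ℕ} {g : Type v}
    [AddCommGroup g] [Module K g] (A : NData K n g) (hA : A.IsHomNambuLieSuper)
    {W : Type w} [AddCommGroup W] [Module K W]
    (φ : MultilinearMap K (fun _ : Fin (n + 1) => g) W)
    (hφ : ∀ (d : Fin (n + 1) → ZMod 2) (u : Fin (n + 1) → g), A.Homog u d →
      ∀ i j : Fin (n + 1), (i : ℕ) + 1 = (j : ℕ) →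
        φ (u ∘ Equiv.swap i j) = -(sgn K (d i) (d j) • φ u))
    (dx dy dz : Fin (n + 1) → ZMod 2) (x y z : Fin (n + 1) → g)
    (hx : A.Homog x dx) (hy : A.Homog y dy) (hz : A.Homog z dz) :
    ∑ j : Fin (n + 1), ∑ i : Fin (n + 1),
        (sgn K (∑ k, dy k) (psum dz j)
          * sgn K (∑ k, dx k) (psum (compDeg (∑ k, dy k) dz j) i)) •
        φ (A.comp (fun k => A.α (x k)) (A.comp y z j) i)
      = sgn K (∑ k, dx k) (∑ k, dy k) •
          ∑ j : Fin (n + 1), ∑ i : Fin (n + 1),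
            (sgn K (∑ k, dx k) (psum dz j)
              * sgn K (∑ k, dy k) (psum (compDeg (∑ k, dx k) dz j) i)) •
            φ (A.comp (fun k => A.α (y k)) (A.comp x z j) i)
        + ∑ i : Fin (n + 1), ∑ j : Fin (n + 1),
            (sgn K ((∑ k, dx k) + ∑ k, dy k) (psum dz i)
              * sgn K (∑ k, dx k) (psum dy j)) •
            φ (A.comp (A.comp x y j) (fun k => A.α (z k)) i) :=
  hom_super_jacobi_general A hA φ dx dy dz x y z hx hy hz
end

section
/- Let T*_θ g be a T*-extension of an n-ary multiplicative Hom-Nambu-Lie superalgebra g. If g is solvable of length k, then T*_θ g is solvable of length k or k+1. -/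
open scoped BigOperators

universe u v w

variable (K : Type u) [Field K]

/-!
The projection `T*_θ g → g, x + f ↦ x` sends the derived series of `T*_θ g` onto that of `g`:
every term of `g^{(m)}` lifts to a homogeneous element of `(T*_θ g)^{(m)}`, because the
bracket of `g`, the cocycle `θ` and the coadjoint action all preserve degrees. Hence
`(T*_θ g)^{(j)} ≠ 0` for `j < k`, while `(T*_θ g)^{(k)}` lies in the abelian ideal `g*`, so
`(T*_θ g)^{(k+1)} = 0`.
-/

theorem MultilinearMap.map_mem_span_image_pi {R ι : Type*} {M : ι → Type*} {N : Type*}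
    [Semiring R] [Fintype ι] [∀ i, AddCommMonoid (M i)] [∀ i, Module R (M i)]
    [AddCommMonoid N] [Module R N] (f : MultilinearMap R M N) {s : ∀ i, Set (M i)}
    {p : ∀ i, M i} (hp : ∀ i, p i ∈ Submodule.span R (s i)) :
    f p ∈ Submodule.span R (f '' Set.univ.pi s) := by
  classical
  suffices key : ∀ (t : Finset ι) (q : ∀ i, M i), (∀ i, q i ∈ Submodule.span R (s i)) →
      (∀ i ∉ t, q i ∈ s i) → f q ∈ Submodule.span R (f '' Set.univ.pi s) from
    key Finset.univ p hp (by simp)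
  intro t
  induction t using Finset.induction_on with
  | empty =>
    exact fun q _ hq => Submodule.subset_span ⟨q, fun i _ => hq i (Finset.notMem_empty i), rfl⟩
  | insert a t _ ih =>
    intro q hspan hq
    have hle : Submodule.span R (s a) ≤
        (Submodule.span R (f '' Set.univ.pi s)).comap (f.toLinearMap q a) := by
      refine Submodule.span_le.2 fun x hx => ?_
      simp only [SetLike.mem_coe, Submodule.mem_comap, MultilinearMap.toLinearMap_apply]
      refine ih _ (fun i => ?_) (fun i hi => ?_)
      · rcases eq_or_ne i a with rfl | h
        · simpa using Submodule.subset_span hx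
        · simpa [h] using hspan i
      · rcases eq_or_ne i a with rfl | h
        · simpa using hx
        · simpa [h] using hq i (by simp [h, hi])
    simpa using hle (hspan a)

namespace NData

variable {K} {n : ℕ} {g : Type v} [AddCommGroup g] [Module K g] (A : NData K n g)

def CochainEven (θ : (Fin (n + 2) → g) → Module.Dual K g) : Prop :=
  ∀ (d : Fin (n + 2) → ZMod 2) (p : Fin (n + 2) → g), A.Homog p d → θ p ∈ A.dualG (∑ i, d i)

theorem eq_zero_of_mem_dualG_of_mem_dualG_add_one {f : Module.Dual K g} {d : ZMod 2}
    (hd : f ∈ A.dualG d) (hd' : f ∈ A.dualG (d + 1)) : f = 0 := by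
  have hdegs : ∀ a b : ZMod 2, b = a + 1 ∨ b = a + 1 + 1 := by decide
  have hker : ∀ e, A.G e ≤ LinearMap.ker f := fun e => by
    rcases hdegs d e with rfl | rfl
    · exact hd
    · exact hd'
  have htop : ⊤ ≤ LinearMap.ker f := A.internal.submodule_iSup_eq_top ▸ iSup_le hker
  ext x
  exact htop Submodule.mem_top

-- `θ` is not assumed multilinear; the zero tuple is homogeneous of every degree.
theorem CochainEven.apply_zero {θ : (Fin (n + 2) → g) → Module.Dual K g}
    (hθ : A.CochainEven θ) : θ 0 = 0 := by
  have hzero : ∀ d, A.Homog (0 : Fin (n + 2) → g) d := fun _ _ => Submodule.zero_mem _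
  refine A.eq_zero_of_mem_dualG_of_mem_dualG_add_one (d := 0) (by simpa using hθ 0 0 (hzero 0)) ?_
  simpa [Finset.sum_pi_single'] using hθ (Pi.single 0 1) 0 (hzero _)

theorem coad_mem_dualG (hbr : A.BrEven) {dx : Fin (n + 1) → ZMod 2} {x : Fin (n + 1) → g}
    (hx : A.Homog x dx) {df : ZMod 2} {φ : Module.Dual K g} (hφ : φ ∈ A.dualG df)
    (e e' : ZMod 2) : A.coad e e' x φ ∈ A.dualG (∑ k, dx k + df) := by
  refine Submodule.smul_mem _ _ fun z hz => ?_
  have hhom : A.Homog (Fin.snoc x z) (Fin.snoc dx (∑ k, dx k + df + 1)) :=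
    fun i => Fin.lastCases (by simpa using hz) (fun j => by simpa using hx j) i
  have hdeg : ∑ i, (Fin.snoc dx (∑ k, dx k + df + 1) : Fin (n + 2) → ZMod 2) i = df + 1 := by
    rw [Fin.sum_univ_castSucc]
    simp only [Fin.snoc_castSucc, Fin.snoc_last]
    linear_combination CharTwo.add_self_eq_zero (∑ k, dx k)
  have hbrz := hbr _ _ hhom
  rw [hdeg] at hbrz
  simpa [adE] using hφ _ hbrz

theorem tbr_mem_tG (hbr : A.BrEven) {θ : (Fin (n + 2) → g) → Module.Dual K g}
    (hθ : A.CochainEven θ) {d : Fin (n + 2) → ZMod 2} {p : Fin (n + 2) → g × Module.Dual K g}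
    (hp : ∀ i, p i ∈ A.tG (d i)) : A.tbr θ d p ∈ A.tG (∑ i, d i) := by
  refine ⟨hbr d _ fun i => (hp i).1, Submodule.add_mem _ (hθ d _ fun i => (hp i).1)
    (Submodule.sum_mem _ fun i _ => Submodule.smul_mem _ _ ?_)⟩
  rw [Fin.sum_univ_succAbove d i, add_comm]
  exact A.coad_mem_dualG hbr (fun k => (hp _).1) (hp i).2 _ _

theorem map_fst_tds_le (θ : (Fin (n + 2) → g) → Module.Dual K g) :
    ∀ m, (A.tds θ m).map (LinearMap.fst K g (Module.Dual K g)) ≤ A.ds m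
  | 0 => le_top
  | m + 1 => by
    rw [Submodule.map_le_iff_le_comap]
    refine Submodule.span_le.2 ?_
    rintro _ ⟨d, p, -, hp, rfl⟩
    exact Submodule.subset_span ⟨_, fun i => map_fst_tds_le θ m ⟨p i, hp i, rfl⟩, rfl⟩

theorem ds_le_span_fst_homogeneous (hbr : A.BrEven) {θ : (Fin (n + 2) → g) → Module.Dual K g}
    (hθ : A.CochainEven θ) :
    ∀ m, A.ds m ≤ Submodule.span K (Prod.fst '' {u | u ∈ A.tds θ m ∧ ∃ d, u ∈ A.tG d})
  | 0 => by
    rw [show A.ds 0 = ⊤ from rfl, ← A.internal.submodule_iSup_eq_top]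
    exact iSup_le fun d x hx =>
      Submodule.subset_span ⟨(x, 0), ⟨Submodule.mem_top, d, hx, Submodule.zero_mem _⟩, rfl⟩
  | m + 1 => by
    refine Submodule.span_le.2 ?_
    rintro _ ⟨p, hp, rfl⟩
    refine Submodule.span_mono ?_
      (A.br.map_mem_span_image_pi fun i => ds_le_span_fst_homogeneous hbr hθ m (hp i))
    rintro _ ⟨q, hq, rfl⟩
    choose u hu hfst using Set.mem_univ_pi.1 hq
    choose d hd using fun i => (hu i).2
    refine ⟨A.tbr θ d u, ⟨Submodule.subset_span ⟨d, u, hd, fun i => (hu i).1, rfl⟩, _,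
      A.tbr_mem_tG hbr hθ hd⟩, ?_⟩
    exact congrArg A.br (funext hfst)

theorem map_fst_tds (hbr : A.BrEven) {θ : (Fin (n + 2) → g) → Module.Dual K g}
    (hθ : A.CochainEven θ) (m : ℕ) :
    (A.tds θ m).map (LinearMap.fst K g (Module.Dual K g)) = A.ds m := by
  refine le_antisymm (A.map_fst_tds_le θ m) ((A.ds_le_span_fst_homogeneous hbr hθ m).trans ?_)
  refine Submodule.span_le.2 ?_
  rintro _ ⟨u, hu, rfl⟩
  exact ⟨u, hu.1, rfl⟩

theorem tbr_eq_zero_of_fst_eq_zero {θ : (Fin (n + 2) → g) → Module.Dual K g} (hθ : θ 0 = 0)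
    (d : Fin (n + 2) → ZMod 2) {p : Fin (n + 2) → g × Module.Dual K g}
    (hp : ∀ i, (p i).1 = 0) : A.tbr θ d p = 0 := by
  simp [tbr, coad, adE, hp, ← Pi.zero_def, hθ]

theorem tds_succ_eq_bot_of_ds_eq_bot {θ : (Fin (n + 2) → g) → Module.Dual K g}
    (hθ : A.CochainEven θ) {m : ℕ} (hm : A.ds m = ⊥) : A.tds θ (m + 1) = ⊥ := by
  refine eq_bot_iff.2 (Submodule.span_le.2 ?_)
  rintro _ ⟨d, p, -, hp, rfl⟩
  refine A.tbr_eq_zero_of_fst_eq_zero hθ.apply_zero d fun i => ?_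
  simpa [hm] using A.map_fst_tds_le θ m ⟨p i, hp i, rfl⟩

end NData

theorem textension_solvable_general {K : Type u} [Field K] {n : ℕ} {g : Type v}
    [AddCommGroup g] [Module K g] (A : NData K n g) (hA : A.IsHomNambuLieSuper)
    (θ : (Fin (n + 2) → g) → Module.Dual K g) (hθ : A.TZ1 θ)
    (k : ℕ) (hk : A.SolvLength k) :
    A.TSolvLength θ k ∨ A.TSolvLength θ (k + 1) := by
  obtain ⟨hds, hds_ne⟩ := hk
  have htds_ne : ∀ j < k, A.tds θ j ≠ ⊥ := fun j hj h =>
    hds_ne j hj (by rw [← A.map_fst_tds hA.1 hθ.1 j, h, Submodule.map_bot])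
  by_cases htds : A.tds θ k = ⊥
  · exact Or.inl ⟨htds, htds_ne⟩
  · refine Or.inr ⟨A.tds_succ_eq_bot_of_ds_eq_bot hθ.1 hds, fun j hj => ?_⟩
    rcases Nat.lt_succ_iff_lt_or_eq.1 hj with hj | rfl
    · exact htds_ne j hj
    · exact htds

/-- If `g` is solvable of length `k`, then the `T*`-extension
`T*_θ g` is solvable of length `k` or `k + 1`. -/
theorem textension_solvable {K : Type u} [Field K] {n : ℕ} {g : Type v}
    [AddCommGroup g] [Module K g] (A : NData K n g) (hA : A.IsHomNambuLieSuper)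
    (θ : (Fin (n + 2) → g) → Module.Dual K g) (hθ : A.TZ1 θ) (hcyc : A.TCyclic θ)
    (k : ℕ) (hk : A.SolvLength k) :
    A.TSolvLength θ k ∨ A.TSolvLength θ (k + 1) :=
  textension_solvable_general A hA θ hθ k hk
end

section
/- T*_{θ₁}g is isometrically equivalent to T*_{θ₂}g if and only if there exists θ' ∈ C⁰(g,g*)_0̄ with θ₁ - θ₂ = δθ', θ'(x)∘α = θ'(α(x)), and the induced bilinear form ⟨x,y⟩_{θ'} = ½(θ'(x)(y)+(-1)^{|x||y|}θ'(y)(x)) vanishes identically. -/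
open scoped BigOperators

universe u v w

variable (K : Type u) [Field K]

namespace NData

variable {K : Type u} [Field K] {n : ℕ} {g : Type v} [AddCommGroup g] [Module K g]

/-- The coboundary `δθ'` of a `0`-cochain `θ' : g → g*` (an even linear map), on a
homogeneous tuple with degrees `d`. -/
def tdelta0 (A : NData K n g) (θ' : g →ₗ[K] Module.Dual K g)
    (d : Fin (n + 2) → ZMod 2) (p : Fin (n + 2) → g) : Module.Dual K g :=
  θ' (A.br p)
    - ∑ i : Fin (n + 2), ((-1 : K) ^ (n + 1 - (i : ℕ)) * sgn K (d i) (ssum d i)) •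
        A.coad ((∑ k, d k) + d i) (d i) (fun k => p (i.succAbove k)) (θ' (p i))

/-- `T*_{θ₁} g` and `T*_{θ₂} g` are equivalent: there is an isomorphism of `n`-ary
multiplicative Hom-Nambu-Lie superalgebras restricting to the identity on `g*` and
inducing the identity modulo `g*`. -/
def TEquiv (A : NData K n g) (θ₁ θ₂ : (Fin (n + 2) → g) → Module.Dual K g) : Prop :=
  ∃ φ : (g × Module.Dual K g) ≃ₗ[K] g × Module.Dual K g,
    (∀ f : Module.Dual K g, φ (0, f) = (0, f)) ∧
    (∀ u : g × Module.Dual K g, (φ u).1 = u.1) ∧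
    (∀ u, φ (A.tα u) = A.tα (φ u)) ∧
    (∀ (d : Fin (n + 2) → ZMod 2) (p : Fin (n + 2) → g × Module.Dual K g),
      (∀ i, p i ∈ A.tG (d i)) → φ (A.tbr θ₁ d p) = A.tbr θ₂ d fun i => φ (p i))

/-- `T*_{θ₁} g` and `T*_{θ₂} g` are isometrically equivalent: equivalent via an
isomorphism preserving the canonical pairings. -/
def TEquivIsom (A : NData K n g) (θ₁ θ₂ : (Fin (n + 2) → g) → Module.Dual K g) : Prop :=
  ∃ φ : (g × Module.Dual K g) ≃ₗ[K] g × Module.Dual K g,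
    (∀ f : Module.Dual K g, φ (0, f) = (0, f)) ∧
    (∀ u : g × Module.Dual K g, (φ u).1 = u.1) ∧
    (∀ u, φ (A.tα u) = A.tα (φ u)) ∧
    (∀ (d : Fin (n + 2) → ZMod 2) (p : Fin (n + 2) → g × Module.Dual K g),
      (∀ i, p i ∈ A.tG (d i)) → φ (A.tbr θ₁ d p) = A.tbr θ₂ d fun i => φ (p i)) ∧
    (∀ (d₁ d₂ : ZMod 2) (u v : g × Module.Dual K g), u ∈ A.tG d₁ → v ∈ A.tG d₂ →
      A.tpair d₁ d₂ (φ u) (φ v) = A.tpair d₁ d₂ u v)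

/-- The bilinear form `⟨x,y⟩_{θ'} = ½(θ'(x)(y) + (-1)^{|x||y|} θ'(y)(x))` induced by a
`0`-cochain `θ'`, on homogeneous elements of degrees `dx`, `dy`. -/
def indForm (_A : NData K n g) (θ' : g →ₗ[K] Module.Dual K g)
    (dx dy : ZMod 2) (x y : g) : K :=
  (2 : K)⁻¹ * (θ' x y + sgn K dx dy * θ' y x)

end NData

/-! An equivalence that fixes `g*` pointwise and induces the identity on `g` is a shear
`x + f ↦ x + (f - θ'(x))`. For a shear, compatibility with the twist maps, the brackets and
the pairings amounts to `θ'(x) ∘ α = θ'(α x)`, `θ₁ - θ₂ = δθ'` and `⟨·,·⟩_{θ'} = 0`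
respectively. The equivalence need not be even, so neither need `θ'`; but its even part
`∑_d π_d^* ∘ θ' ∘ π_d` (with `π_d` the projections onto the homogeneous components) still
satisfies all three conditions, because the bracket, `α`, `θ₁` and `θ₂` are even. -/

section GradedProjection

variable {R : Type*} [CommRing R] {ι : Type*} [DecidableEq ι] {M : Type*} [AddCommGroup M]
  [Module R M] (G : ι → Submodule R M) [DirectSum.Decomposition G]

noncomputable def gradedProj (i : ι) : M →ₗ[R] M :=
  (G i).subtype ∘ₗ DirectSum.component R ι (fun j => G j) i ∘ₗ
    (DirectSum.decomposeLinearEquiv G).toLinearMap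

variable {G}

theorem gradedProj_of_mem {i : ι} {x : M} (hx : x ∈ G i) : gradedProj G i x = x :=
  DirectSum.decompose_of_mem_same G hx

theorem gradedProj_of_mem_of_ne {i j : ι} {x : M} (hx : x ∈ G i) (hij : i ≠ j) :
    gradedProj G j x = 0 :=
  DirectSum.decompose_of_mem_ne G hx hij

theorem gradedProj_map_of_forall_mem_add [AddRightCancelSemigroup ι] {L : M →ₗ[R] M} {D : ι}
    (hL : ∀ (i : ι) (x : M), x ∈ G i → L x ∈ G (i + D)) {i j : ι} (hij : i + D = j) (z : M) :
    gradedProj G j (L z) = L (gradedProj G i z) := by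
  induction z using DirectSum.Decomposition.inductionOn G with
  | zero => simp
  | add x y hx hy => simp only [map_add, hx, hy]
  | @homogeneous k z =>
    by_cases hk : k = i
    · subst hk
      rw [gradedProj_of_mem z.2, gradedProj_of_mem (hij ▸ hL _ _ z.2)]
    · have hkj : k + D ≠ j := hij ▸ fun h => hk (add_right_cancel h)
      rw [gradedProj_of_mem_of_ne z.2 hk, gradedProj_of_mem_of_ne (hL _ _ z.2) hkj, map_zero]

theorem dualMap_gradedProj_of_forall_ne {i : ι} {f : Module.Dual R M}
    (hf : ∀ j ≠ i, ∀ x ∈ G j, f x = 0) : (gradedProj G i).dualMap f = f := by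
  ext z
  rw [LinearMap.dualMap_apply]
  induction z using DirectSum.Decomposition.inductionOn G with
  | zero => simp
  | add x y hx hy => simp only [map_add, hx, hy]
  | @homogeneous k z =>
    by_cases hk : k = i
    · subst hk
      rw [gradedProj_of_mem z.2]
    · rw [gradedProj_of_mem_of_ne z.2 hk, map_zero, hf k hk z z.2]

variable (G)

noncomputable def gradedPart [Fintype ι] (t : M →ₗ[R] Module.Dual R M) :
    M →ₗ[R] Module.Dual R M :=
  ∑ i, (gradedProj G i).dualMap ∘ₗ t ∘ₗ gradedProj G i

theorem gradedPart_apply_of_mem [Fintype ι] (t : M →ₗ[R] Module.Dual R M) {i : ι} {x : M}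
    (hx : x ∈ G i) : gradedPart G t x = (gradedProj G i).dualMap (t x) := by
  rw [gradedPart, LinearMap.sum_apply, Finset.sum_eq_single i]
  · simp [gradedProj_of_mem hx]
  · intro j _ hji
    simp [gradedProj_of_mem_of_ne hx (Ne.symm hji)]
  · simp

end GradedProjection

section Shear

variable {R : Type*} [Ring R] {M N : Type*} [AddCommGroup M] [Module R M] [AddCommGroup N]
  [Module R N]

def prodShear (t : M →ₗ[R] N) : (M × N) ≃ₗ[R] M × N :=
  (LinearEquiv.refl R M).skewProd (LinearEquiv.refl R N) (-t)

@[simp]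
theorem prodShear_apply (t : M →ₗ[R] N) (u : M × N) : prodShear t u = (u.1, u.2 - t u.1) := by
  simp [prodShear, LinearEquiv.skewProd_apply, sub_eq_add_neg]

theorem exists_eq_prodShear {φ : (M × N) ≃ₗ[R] M × N} (hfix : ∀ f : N, φ (0, f) = (0, f))
    (hfst : ∀ u, (φ u).1 = u.1) : ∃ t : M →ₗ[R] N, φ = prodShear t := by
  refine ⟨-(LinearMap.snd R M N ∘ₗ φ.toLinearMap ∘ₗ LinearMap.inl R M N), LinearEquiv.ext ?_⟩
  rintro ⟨x, f⟩
  have hsplit : φ (x, f) = φ (x, 0) + φ (0, f) := by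
    rw [← map_add, Prod.mk_add_mk, add_zero, zero_add]
  rw [hsplit, hfix]
  ext
  · simp [hfst]
  · simp [add_comm]

end Shear

theorem ZMod.eq_add_one_of_ne_mod_two {a b : ZMod 2} (h : a ≠ b) : a = b + 1 := by
  revert a b; decide

namespace NData

variable {K : Type u} [Field K] {n : ℕ} {g : Type v} [AddCommGroup g] [Module K g]
  (A : NData K n g)

theorem prodShear_tα_eq_iff (t : g →ₗ[K] Module.Dual K g) (u : g × Module.Dual K g) :
    prodShear t (A.tα u) = A.tα (prodShear t u) ↔ (t u.1).comp A.α = t (A.α u.1) := by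
  simp only [tα, prodShear_apply, LinearMap.prodMap_apply, Prod.mk.injEq, true_and, map_sub,
    sub_right_inj]
  exact ⟨fun h => h.symm, fun h => h.symm⟩

theorem prodShear_tbr_eq_iff (θ₁ θ₂ : (Fin (n + 2) → g) → Module.Dual K g)
    (t : g →ₗ[K] Module.Dual K g) (d : Fin (n + 2) → ZMod 2)
    (p : Fin (n + 2) → g × Module.Dual K g) :
    prodShear t (A.tbr θ₁ d p) = A.tbr θ₂ d (fun i => prodShear t (p i)) ↔
      θ₁ (fun i => (p i).1) - θ₂ (fun i => (p i).1) = A.tdelta0 t d (fun i => (p i).1) := by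
  have hcoad : ∀ a b q (f h : Module.Dual K g),
      A.coad a b q (f - h) = A.coad a b q f - A.coad a b q h := fun a b q f h => by
    simp only [coad, LinearMap.sub_comp, smul_sub]
  simp only [tbr, tdelta0, prodShear_apply, Prod.mk.injEq, true_and, hcoad, smul_sub,
    Finset.sum_sub_distrib]
  constructor <;> intro h <;> linear_combination (norm := module) h

theorem tpair_prodShear (t : g →ₗ[K] Module.Dual K g) (d₁ d₂ : ZMod 2)
    (u v : g × Module.Dual K g) :
    A.tpair d₁ d₂ (prodShear t u) (prodShear t v)
      = A.tpair d₁ d₂ u v - (t u.1 v.1 + sgn K d₁ d₂ * t v.1 u.1) := by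
  simp only [tpair, prodShear_apply, LinearMap.sub_apply]
  ring

theorem indForm_eq_zero_iff (h2 : (2 : K) ≠ 0) (t : g →ₗ[K] Module.Dual K g) (dx dy : ZMod 2)
    (x y : g) : A.indForm t dx dy x y = 0 ↔ t x y + sgn K dx dy * t y x = 0 := by
  simp [indForm, h2]

theorem homog_snoc {m : ℕ} {q : Fin m → g} {dq : Fin m → ZMod 2} {x : g} {e : ZMod 2}
    (hq : A.Homog q dq) (hx : x ∈ A.G e) : A.Homog (Fin.snoc q x) (Fin.snoc dq e) := by
  intro i
  refine Fin.lastCases ?_ (fun k => ?_) i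
  · simpa using hx
  · simpa using hq k

theorem adE_mem (hbr : A.BrEven) {q : Fin (n + 1) → g} {dq : Fin (n + 1) → ZMod 2}
    (hq : A.Homog q dq) {e : ZMod 2} {x : g} (hx : x ∈ A.G e) :
    A.adE q x ∈ A.G (e + ∑ k, dq k) := by
  simpa [adE, Fin.sum_univ_castSucc, add_comm] using hbr _ _ (A.homog_snoc hq hx)

section Decomposition

variable [DirectSum.Decomposition A.G]

theorem dualMap_gradedProj_of_mem_dualG {d : ZMod 2} {f : Module.Dual K g}
    (hf : f ∈ A.dualG d) : (gradedProj A.G d).dualMap f = f :=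
  dualMap_gradedProj_of_forall_ne fun e he => by
    rw [ZMod.eq_add_one_of_ne_mod_two he]
    exact hf

theorem gradedPart_mem_dualG (t : g →ₗ[K] Module.Dual K g) {d : ZMod 2} {x : g}
    (hx : x ∈ A.G d) : gradedPart A.G t x ∈ A.dualG d := by
  intro y hy
  rw [gradedPart_apply_of_mem A.G t hx, LinearMap.dualMap_apply,
    gradedProj_of_mem_of_ne hy (by simp), map_zero]

theorem coad_dualMap_gradedProj (hbr : A.BrEven) {q : Fin (n + 1) → g}
    {dq : Fin (n + 1) → ZMod 2} (hq : A.Homog q dq) {i j : ZMod 2} (hij : i + ∑ k, dq k = j)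
    (a b : ZMod 2) (f : Module.Dual K g) :
    A.coad a b q ((gradedProj A.G j).dualMap f) = (gradedProj A.G i).dualMap (A.coad a b q f) := by
  ext z
  simp only [coad, LinearMap.smul_apply, LinearMap.comp_apply, LinearMap.dualMap_apply,
    gradedProj_map_of_forall_mem_add (fun _ _ hx => A.adE_mem hbr hq hx) hij]

theorem tdelta0_gradedPart (hbr : A.BrEven) (t : g →ₗ[K] Module.Dual K g)
    {d : Fin (n + 2) → ZMod 2} {p : Fin (n + 2) → g} (hp : A.Homog p d) :
    A.tdelta0 (gradedPart A.G t) d p = (gradedProj A.G (∑ i, d i)).dualMap (A.tdelta0 t d p) := by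
  simp only [tdelta0, map_sub, map_sum, map_smul, gradedPart_apply_of_mem A.G t (hbr d p hp),
    gradedPart_apply_of_mem A.G t (hp _)]
  congr 1
  refine Finset.sum_congr rfl fun i _ => ?_
  rw [A.coad_dualMap_gradedProj hbr (fun k => hp (i.succAbove k))]
  rw [Fin.sum_univ_succAbove d i, add_assoc, CharTwo.add_self_eq_zero, add_zero]

theorem gradedPart_comp_α (hα : A.AlphaEven) {t : g →ₗ[K] Module.Dual K g}
    (ht : ∀ x, (t x).comp A.α = t (A.α x)) (x : g) :
    (gradedPart A.G t x).comp A.α = gradedPart A.G t (A.α x) := by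
  have hproj : ∀ (e : ZMod 2) (z : g), gradedProj A.G e (A.α z) = A.α (gradedProj A.G e z) :=
    fun e => gradedProj_map_of_forall_mem_add (fun e z hz => (add_zero e).symm ▸ hα e z hz)
      (add_zero e)
  ext y
  simp only [gradedPart, LinearMap.comp_apply, LinearMap.sum_apply, LinearMap.dualMap_apply,
    hproj, ← ht]

theorem indForm_gradedPart {t : g →ₗ[K] Module.Dual K g} {dx dy : ZMod 2} {x y : g}
    (hx : x ∈ A.G dx) (hy : y ∈ A.G dy) (ht : A.indForm t dx dy x y = 0) :
    A.indForm (gradedPart A.G t) dx dy x y = 0 := by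
  rw [indForm, gradedPart_apply_of_mem A.G t hx, gradedPart_apply_of_mem A.G t hy,
    LinearMap.dualMap_apply, LinearMap.dualMap_apply]
  by_cases hd : dx = dy
  · subst hd
    rwa [gradedProj_of_mem hx, gradedProj_of_mem hy]
  · rw [gradedProj_of_mem_of_ne hy (Ne.symm hd), gradedProj_of_mem_of_ne hx hd]
    simp

end Decomposition

end NData

theorem textension_isom_equiv_iff_general {K : Type u} [Field K] (hchar : (2 : K) ≠ 0)
    {n : ℕ} {g : Type v} [AddCommGroup g] [Module K g]
    (A : NData K n g) (hA : A.IsHomNambuLieSuper)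
    (θ₁ θ₂ : (Fin (n + 2) → g) → Module.Dual K g)
    (hθ₁ : A.TZ1 θ₁) (hθ₂ : A.TZ1 θ₂) :
    A.TEquivIsom θ₁ θ₂ ↔
      ∃ θ' : g →ₗ[K] Module.Dual K g,
        (∀ (d : ZMod 2) (x : g), x ∈ A.G d → θ' x ∈ A.dualG d) ∧
        (∀ (d : Fin (n + 2) → ZMod 2) (p : Fin (n + 2) → g), A.Homog p d →
          θ₁ p - θ₂ p = A.tdelta0 θ' d p) ∧
        (∀ x : g, (θ' x).comp A.α = θ' (A.α x)) ∧
        (∀ (dx dy : ZMod 2) (x y : g), x ∈ A.G dx → y ∈ A.G dy →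
          A.indForm θ' dx dy x y = 0) := by
  let := A.internal.chooseDecomposition
  have hzero : ∀ {d : ZMod 2} {x : g}, x ∈ A.G d → ((x, 0) : g × Module.Dual K g) ∈ A.tG d :=
    fun hx => ⟨hx, Submodule.zero_mem _⟩
  constructor
  · rintro ⟨φ, hfix, hfst, hα, hbr, hpair⟩
    obtain ⟨t, rfl⟩ := exists_eq_prodShear hfix hfst
    have hδ : ∀ d p, A.Homog p d → θ₁ p - θ₂ p = A.tdelta0 t d p := fun d p hp =>
      (A.prodShear_tbr_eq_iff θ₁ θ₂ t d fun i => (p i, 0)).1 (hbr d _ fun i => hzero (hp i))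
    refine ⟨gradedPart A.G t, fun _ _ => A.gradedPart_mem_dualG t, fun d p hp => ?_,
      A.gradedPart_comp_α hA.2.2.1 fun x => (A.prodShear_tα_eq_iff t (x, 0)).1 (hα _),
      fun dx dy x y hx hy => A.indForm_gradedPart hx hy ?_⟩
    · rw [A.tdelta0_gradedPart hA.1 t hp, ← hδ d p hp, map_sub,
        A.dualMap_gradedProj_of_mem_dualG (hθ₁.1 d p hp),
        A.dualMap_gradedProj_of_mem_dualG (hθ₂.1 d p hp)]
    · have h := hpair dx dy (x, 0) (y, 0) (hzero hx) (hzero hy)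
      rwa [A.tpair_prodShear, sub_eq_self, ← A.indForm_eq_zero_iff hchar] at h
  · rintro ⟨t, -, hδ, hα, hform⟩
    refine ⟨prodShear t, fun f => by simp, fun u => rfl,
      fun u => (A.prodShear_tα_eq_iff t u).2 (hα u.1),
      fun d p hp => (A.prodShear_tbr_eq_iff θ₁ θ₂ t d p).2 (hδ d _ fun i => (hp i).1),
      fun d₁ d₂ u v hu hv => ?_⟩
    rw [A.tpair_prodShear, (A.indForm_eq_zero_iff hchar t d₁ d₂ _ _).1 (hform _ _ _ _ hu.1 hv.1),
      sub_zero]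

/-- `T*_{θ₁} g` is isometrically equivalent to `T*_{θ₂} g` iff there
is `θ' ∈ C⁰(g,g*)₀` with `θ₁ - θ₂ = δθ'`, `θ'(x) ∘ α = θ'(α(x))`, and vanishing
induced bilinear form `⟨,⟩_{θ'}`. -/
theorem textension_isom_equiv_iff {K : Type u} [Field K] (hchar : (2 : K) ≠ 0)
    {n : ℕ} {g : Type v} [AddCommGroup g] [Module K g]
    (A : NData K n g) (hA : A.IsHomNambuLieSuper)
    (θ₁ θ₂ : (Fin (n + 2) → g) → Module.Dual K g)
    (hθ₁ : A.TZ1 θ₁) (hθ₂ : A.TZ1 θ₂) (hc₁ : A.TCyclic θ₁) (hc₂ : A.TCyclic θ₂) :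
    A.TEquivIsom θ₁ θ₂ ↔
      ∃ θ' : g →ₗ[K] Module.Dual K g,
        (∀ (d : ZMod 2) (x : g), x ∈ A.G d → θ' x ∈ A.dualG d) ∧
        (∀ (d : Fin (n + 2) → ZMod 2) (p : Fin (n + 2) → g), A.Homog p d →
          θ₁ p - θ₂ p = A.tdelta0 θ' d p) ∧
        (∀ x : g, (θ' x).comp A.α = θ' (A.α x)) ∧
        (∀ (dx dy : ZMod 2) (x y : g), x ∈ A.G dx → y ∈ A.G dy →
          A.indForm θ' dx dy x y = 0) :=
  textension_isom_equiv_iff_general hchar A hA θ₁ θ₂ hθ₁ hθ₂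
end
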